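/- arXiv:2007.15445 — 2 statements merged into one kernel-verified Lean document; each statement's English description precedes it below -/
import Mathlib

section
/- Let n ≥ 1 and let λ, π₁, π₂ be real numbers with 0 < 2λ < π₁ and 0 < 2λ < π₂, and set ψᵢ = arcosh(πᵢ/(2λ)) > 0 for i = 1,2. For i = 1,2, let Zᵢ be the n×n tridiagonal Toeplitz matrix with diagonal entries πᵢ, first off-diagonal entries λ, and zeros elsewhere, and let P = Z₁ Z₂. Then P is invertible, and the entries of P⁻¹ exhibit exponential (log-linear in absolute value) off-diagonal decay at rate min(ψ₁,ψ₂): for all 1 ≤ r, t ≤ n, |(P⁻¹)_{rt}| ≤ C · (|t−r| + 1 + 2·exp(−(ψ₁+ψ₂))/(1 − exp(−(ψ₁+ψ₂)))) · exp(−min(ψ₁,ψ₂)·|t−r|), where C = 1 / (4λ² · sinh(ψ₁) · sinh(ψ₂) · (1 − exp(−2ψ₁(n+1))) · (1 − exp(−2ψ₂(n+1)))). -/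
/-!
Write `πᵢ = 2λ cosh ψᵢ`. With 0-based indices, the tridiagonal Toeplitz matrix `Zᵢ` has the
explicit inverse
`(Zᵢ⁻¹)ⱼₖ = (-1)^(j+k) sinh ((min j k + 1) ψᵢ) sinh ((n - max j k) ψᵢ) / (λ sinh ψᵢ sinh ((n+1)ψᵢ))`:
both factors solve the recurrence `λ x_{j-1} + πᵢ x_j + λ x_{j+1} = 0`, the first vanishing at
`j = -1` and the second at `j = n`, and their Casoratian is the constant `sinh ψᵢ sinh ((n+1) ψᵢ)`.
Bounding `sinh` by `exp / 2` gives
`|(Zᵢ⁻¹)ⱼₖ| ≤ e^(-ψᵢ |j-k|) / (2λ sinh ψᵢ (1 - e^(-2ψᵢ(n+1))))`.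
Finally `P⁻¹ = Z₂⁻¹ Z₁⁻¹`, and in the convolution `∑ₖ e^(-ψ₂|r-k|) e^(-ψ₁|k-t|)` each index `k`
between `r` and `t` contributes at most `e^(-min ψ₁ ψ₂ |t-r|)`, while outside that range the
terms decay further by the ratio `e^(-(ψ₁+ψ₂))`, giving the two geometric tails.
-/

open Matrix Real

/-- The inverse hyperbolic cosine: arcosh x = log (x + sqrt (x^2 - 1)). -/
noncomputable def arcosh (x : ℝ) : ℝ := Real.log (x + Real.sqrt (x ^ 2 - 1))

open Finset

lemma mul_cosh_arcosh_div {c x : ℝ} (hc : 0 < c) (hx : c ≤ x) :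
    c * cosh (_root_.arcosh (x / c)) = x := by
  show c * cosh (Real.arcosh (x / c)) = x
  rw [Real.cosh_arcosh ((one_le_div hc).2 hx), mul_div_cancel₀ _ hc.ne']

lemma sinh_add_mul_sinh_sub_sinh_mul_sinh_sub (x y z : ℝ) :
    sinh (x + z) * sinh y - sinh x * sinh (y - z) = sinh z * sinh (x + y) := by
  simp only [sinh_add, sinh_sub]
  ring

lemma sinh_eq_exp_mul_one_sub_exp (x : ℝ) : sinh x = exp x * (1 - exp (-2 * x)) / 2 := by
  rw [sinh_eq, mul_sub, mul_one, ← exp_add]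
  ring_nf

noncomputable def altSinh (x y : ℝ) (a : ℤ) : ℝ := (-1) ^ a * sinh (x + a * y)

lemma altSinh_sub_one_add_altSinh_add_one (x y : ℝ) (a : ℤ) :
    altSinh x y (a - 1) + altSinh x y (a + 1) = -(2 * cosh y * altSinh x y a) := by
  have hsign : ((-1 : ℝ) ^ (a - 1) = -(-1) ^ a) ∧ ((-1 : ℝ) ^ (a + 1) = -(-1) ^ a) := by
    constructor <;> simp [zpow_sub₀, zpow_add₀, div_neg]
  simp only [altSinh, hsign]
  push_cast
  rw [show x + (a - 1) * y = x + a * y - y by ring, show x + (a + 1) * y = x + a * y + y by ring,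
    sinh_sub (x + a * y), sinh_add (x + a * y)]
  ring

lemma altSinh_wronskian (x₁ x₂ y : ℝ) (a : ℤ) :
    altSinh x₁ y a * altSinh x₂ (-y) (a + 1) - altSinh x₁ y (a + 1) * altSinh x₂ (-y) a =
      sinh y * sinh (x₁ + x₂) := by
  have hsign : (-1 : ℝ) ^ a * (-1) ^ (a + 1) = -1 := by
    rw [zpow_add_one₀ (by norm_num), ← mul_assoc, ← mul_zpow]; norm_num
  have key := sinh_add_mul_sinh_sub_sinh_mul_sinh_sub (x₁ + a * y) (x₂ - a * y) y
  rw [show x₁ + a * y + (x₂ - a * y) = x₁ + x₂ by ring] at key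
  simp only [altSinh]
  push_cast
  rw [← key, show x₂ + (a + 1) * -y = x₂ - a * y - y by ring,
    show x₁ + (a + 1) * y = x₁ + a * y + y by ring, show x₂ + a * -y = x₂ - a * y by ring]
  linear_combination (sinh (x₁ + a * y) * sinh (x₂ - a * y - y)
    - sinh (x₁ + a * y + y) * sinh (x₂ - a * y)) * hsign

lemma abs_altSinh_le (x y : ℝ) (a : ℤ) (h : 0 ≤ x + a * y) :
    |altSinh x y a| ≤ exp (x + a * y) / 2 := by
  rw [altSinh, abs_mul, abs_neg_one_zpow, one_mul, abs_of_nonneg (sinh_nonneg_iff.2 h), sinh_eq]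
  linarith [exp_pos (-(x + a * y))]

def tridiagToeplitz {R : Type*} [Zero R] (n : ℕ) (a b : R) : Matrix (Fin n) (Fin n) R :=
  of fun i j => if (i : ℕ) = (j : ℕ) then a else if ((i : ℤ) - (j : ℤ)).natAbs = 1 then b else 0

lemma sum_tridiagToeplitz_mul {R : Type*} [Semiring R] {n : ℕ} (a b : R) {f : ℤ → R}
    (hf₀ : f (-1) = 0) (hfn : f n = 0) (i : Fin n) :
    ∑ k : Fin n, tridiagToeplitz n a b i k * f k = b * f (i - 1) + a * f i + b * f (i + 1) := by
  have hsplit : ∀ k : ℕ, (if (i : ℕ) = k then a else if ((i : ℤ) - k).natAbs = 1 then b else 0)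
      * f k = (if k + 1 = i then b * f k else 0) + (if k = i then a * f k else 0)
        + (if k = i + 1 then b * f k else 0) := by
    intro k
    split_ifs <;> first | (exfalso; omega) | simp
  have hleft : ∑ k ∈ range n, (if k + 1 = i then b * f k else 0) = b * f (i - 1) := by
    obtain ⟨i, hi⟩ := i
    cases i with
    | zero => simp [hf₀]
    | succ m => simp [sum_ite_eq', show m < n by omega]
  have hright : ∑ k ∈ range n, (if k = i + 1 then b * f k else 0) = b * f (i + 1) := by
    rw [sum_ite_eq']
    split_ifs with h
    · push_cast; rfl
    · rw [show (i : ℤ) + 1 = n by simp at h; omega, hfn, mul_zero]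
  simp only [tridiagToeplitz, of_apply]
  rw [Fin.sum_univ_eq_sum_range (fun k => (if (i : ℕ) = k then a
    else if ((i : ℤ) - k).natAbs = 1 then b else 0) * f k), sum_congr rfl fun k _ => hsplit k,
    sum_add_distrib, sum_add_distrib, hleft, hright, sum_ite_eq', if_pos (mem_range.2 i.isLt)]

-- `altSinh ψ ψ a = (-1) ^ a * sinh ((a + 1) * ψ)` vanishes at `a = -1`,
-- `altSinh (n * ψ) (-ψ) a = (-1) ^ a * sinh ((n - a) * ψ)` vanishes at `a = n`.
noncomputable def tridiagGreen (n : ℕ) (b ψ : ℝ) (i j : ℤ) : ℝ :=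
  altSinh ψ ψ (min i j) * altSinh (n * ψ) (-ψ) (max i j) / (b * sinh ψ * sinh ((n + 1) * ψ))

lemma tridiagGreen_recurrence (n : ℕ) {b ψ : ℝ} (hb : b ≠ 0) (hψ : ψ ≠ 0) (i j : ℤ) :
    b * tridiagGreen n b ψ (i - 1) j + 2 * b * cosh ψ * tridiagGreen n b ψ i j
      + b * tridiagGreen n b ψ (i + 1) j = if i = j then 1 else 0 := by
  have hD : b * sinh ψ * sinh ((n + 1) * ψ) ≠ 0 := mul_ne_zero (mul_ne_zero hb (sinh_ne_zero.2 hψ))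
    (sinh_ne_zero.2 (mul_ne_zero (by positivity) hψ))
  have hu := altSinh_sub_one_add_altSinh_add_one ψ ψ i
  have hv := altSinh_sub_one_add_altSinh_add_one (n * ψ) (-ψ) i
  rw [cosh_neg] at hv
  rcases lt_trichotomy i j with h | rfl | h
  · simp only [tridiagGreen, if_neg h.ne, min_eq_left (by omega : i - 1 ≤ j),
      max_eq_right (by omega : i - 1 ≤ j), min_eq_left h.le, max_eq_right h.le,
      min_eq_left (by omega : i + 1 ≤ j), max_eq_right (by omega : i + 1 ≤ j)]
    linear_combination (b * altSinh (n * ψ) (-ψ) j / (b * sinh ψ * sinh ((n + 1) * ψ))) * hu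
  · have hW := altSinh_wronskian ψ (n * ψ) ψ i
    rw [show ψ + n * ψ = (n + 1) * ψ by ring] at hW
    simp only [tridiagGreen, if_pos, min_eq_left (by omega : i - 1 ≤ i),
      max_eq_right (by omega : i - 1 ≤ i), min_self, max_self,
      min_eq_right (by omega : i ≤ i + 1), max_eq_left (by omega : i ≤ i + 1)]
    linear_combination (b * altSinh (n * ψ) (-ψ) i / (b * sinh ψ * sinh ((n + 1) * ψ))) * hu
      + (b / (b * sinh ψ * sinh ((n + 1) * ψ))) * hW + div_self hD
  · simp only [tridiagGreen, if_neg h.ne', min_eq_right (by omega : j ≤ i - 1),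
      max_eq_left (by omega : j ≤ i - 1), min_eq_right h.le, max_eq_left h.le,
      min_eq_right (by omega : j ≤ i + 1), max_eq_left (by omega : j ≤ i + 1)]
    linear_combination (b * altSinh ψ ψ j / (b * sinh ψ * sinh ((n + 1) * ψ))) * hv

lemma tridiagGreen_neg_one_left (n : ℕ) (b ψ : ℝ) {j : ℤ} (hj : -1 ≤ j) :
    tridiagGreen n b ψ (-1) j = 0 := by
  simp [tridiagGreen, altSinh, min_eq_left hj]

lemma tridiagGreen_dim_left (n : ℕ) (b ψ : ℝ) {j : ℤ} (hj : j ≤ n) :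
    tridiagGreen n b ψ n j = 0 := by
  simp [tridiagGreen, altSinh, max_eq_left hj]

noncomputable def tridiagGreenMatrix (n : ℕ) (b ψ : ℝ) : Matrix (Fin n) (Fin n) ℝ :=
  of fun i j => tridiagGreen n b ψ i j

theorem tridiagToeplitz_mul_tridiagGreenMatrix (n : ℕ) {b ψ : ℝ} (hb : b ≠ 0) (hψ : ψ ≠ 0) :
    tridiagToeplitz n (2 * b * cosh ψ) b * tridiagGreenMatrix n b ψ = 1 := by
  ext i j
  have hj : (-1 : ℤ) ≤ j ∧ (j : ℤ) ≤ n := by omega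
  rw [mul_apply, one_apply]
  simp only [tridiagGreenMatrix, of_apply]
  refine (sum_tridiagToeplitz_mul _ _ (f := fun k => tridiagGreen n b ψ k j)
    (tridiagGreen_neg_one_left n b ψ hj.1) (tridiagGreen_dim_left n b ψ hj.2) i).trans ?_
  rw [tridiagGreen_recurrence n hb hψ]
  simp [Fin.ext_iff]

theorem abs_tridiagGreenMatrix_le {n : ℕ} {b ψ : ℝ} (hb : 0 < b) (hψ : 0 < ψ) (i j : Fin n) :
    |tridiagGreenMatrix n b ψ i j| ≤
      exp (-ψ * |(i : ℝ) - j|) / (2 * b * sinh ψ * (1 - exp (-2 * ψ * (n + 1)))) := by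
  set a : ℤ := min (i : ℤ) j
  set c : ℤ := max (i : ℤ) j
  have ha : 0 ≤ (a : ℝ) := by exact_mod_cast le_min (by positivity) (by positivity)
  have hc : (c : ℝ) ≤ n := by exact_mod_cast max_le (by omega) (by omega)
  have hdist : |(i : ℝ) - j| = c - a := by
    simp only [c, a, Int.cast_max, Int.cast_min, Int.cast_natCast]
    exact (max_sub_min_eq_abs' _ _).symm
  have hu := abs_altSinh_le ψ ψ a (by nlinarith)
  have hv := abs_altSinh_le (n * ψ) (-ψ) c (by nlinarith)
  have hE : 0 < 1 - exp (-2 * ψ * (n + 1)) := by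
    rw [sub_pos, exp_lt_one_iff]; nlinarith
  have hS : 0 < b * sinh ψ := mul_pos hb (sinh_pos_iff.2 hψ)
  have hD : 0 < b * sinh ψ * sinh ((n + 1) * ψ) :=
    mul_pos hS (sinh_pos_iff.2 (by positivity))
  rw [tridiagGreenMatrix, of_apply, tridiagGreen, abs_div, abs_mul, abs_of_pos hD, hdist]
  calc |altSinh ψ ψ a| * |altSinh (n * ψ) (-ψ) c| / (b * sinh ψ * sinh ((n + 1) * ψ))
      ≤ exp (ψ + a * ψ) / 2 * (exp (n * ψ + c * -ψ) / 2) / (b * sinh ψ * sinh ((n + 1) * ψ)) := by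
        gcongr
    _ = exp (-ψ * (c - a)) / (2 * b * sinh ψ * (1 - exp (-2 * ψ * (n + 1)))) := by
        rw [sinh_eq_exp_mul_one_sub_exp ((n + 1) * ψ),
          show -2 * ((n + 1) * ψ) = -2 * ψ * (n + 1) by ring]
        have key : exp (ψ + a * ψ) * exp (n * ψ + c * -ψ) =
            exp (-ψ * (c - a)) * exp ((n + 1) * ψ) := by
          rw [← exp_add, ← exp_add]; ring_nf
        rw [div_eq_div_iff (by positivity) (by positivity)]
        linear_combination (b * sinh ψ * (1 - exp (-2 * ψ * (n + 1))) / 2) * key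

lemma sum_range_pow_sub_le {q : ℝ} (hq₀ : 0 ≤ q) (hq₁ : q < 1) (r : ℕ) :
    ∑ k ∈ range r, q ^ (r - k) ≤ q / (1 - q) := by
  rw [range_eq_Ico, sum_Ico_reflect _ _ (Nat.le_succ r), Nat.add_sub_cancel_left]
  simpa using geom_sum_Ico_le_of_lt_one (m := 1) hq₀ hq₁

lemma sum_Ico_pow_sub_le {q : ℝ} (hq₀ : 0 ≤ q) (hq₁ : q < 1) (t n : ℕ) :
    ∑ k ∈ Ico (t + 1) (n + t), q ^ (k - t) ≤ q / (1 - q) := by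
  rw [add_comm t 1, ← sum_Ico_add' (fun k => q ^ (k - t))]
  simp only [Nat.add_sub_cancel]
  simpa using geom_sum_Ico_le_of_lt_one (m := 1) (n := n) hq₀ hq₁

lemma exp_mul_exp_le_mul_pow (ψ₁ ψ₂ : ℝ) {r t : ℕ} (hrt : r ≤ t) (k : ℕ) :
    exp (-ψ₂ * |(r : ℝ) - k|) * exp (-ψ₁ * |(k : ℝ) - t|) ≤
      exp (-min ψ₁ ψ₂ * ((t : ℝ) - r)) * exp (-(ψ₁ + ψ₂)) ^ (r - k + (k - t)) := by
  have hm₁ := min_le_left ψ₁ ψ₂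
  have hm₂ := min_le_right ψ₁ ψ₂
  have hrt' : (r : ℝ) ≤ t := by exact_mod_cast hrt
  rw [← exp_nat_mul, ← exp_add, ← exp_add, exp_le_exp]
  rcases lt_or_ge k r with hkr | hrk
  · rw [show r - k + (k - t) = r - k by omega, Nat.cast_sub hkr.le,
      abs_of_nonneg (by simp; omega), abs_of_nonpos (by simp; omega)]
    nlinarith [mul_le_mul_of_nonneg_right hm₁ (sub_nonneg.2 hrt')]
  rcases le_or_gt k t with hkt | htk
  · have hrk' : (r : ℝ) ≤ k := by exact_mod_cast hrk
    have hkt' : (k : ℝ) ≤ t := by exact_mod_cast hkt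
    rw [show r - k + (k - t) = 0 by omega, Nat.cast_zero, zero_mul, add_zero,
      abs_of_nonpos (by linarith), abs_of_nonpos (by linarith)]
    nlinarith [mul_le_mul_of_nonneg_right hm₁ (sub_nonneg.2 hkt'),
      mul_le_mul_of_nonneg_right hm₂ (sub_nonneg.2 hrk')]
  · rw [show r - k + (k - t) = k - t by omega, Nat.cast_sub htk.le,
      abs_of_nonpos (by simp; omega), abs_of_nonneg (by simp; omega)]
    nlinarith [mul_le_mul_of_nonneg_right hm₂ (sub_nonneg.2 hrt')]

lemma sum_exp_mul_exp_le_of_le {ψ₁ ψ₂ : ℝ} (h₁ : 0 < ψ₁) (h₂ : 0 < ψ₂) (n : ℕ) {r t : ℕ}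
    (hrt : r ≤ t) :
    ∑ k ∈ range n, exp (-ψ₂ * |(r : ℝ) - k|) * exp (-ψ₁ * |(k : ℝ) - t|) ≤
      ((t : ℝ) - r + 1 + 2 * exp (-(ψ₁ + ψ₂)) / (1 - exp (-(ψ₁ + ψ₂)))) *
        exp (-min ψ₁ ψ₂ * ((t : ℝ) - r)) := by
  set q := exp (-(ψ₁ + ψ₂))
  set E := exp (-min ψ₁ ψ₂ * ((t : ℝ) - r))
  set f : ℕ → ℝ := fun k => exp (-ψ₂ * |(r : ℝ) - k|) * exp (-ψ₁ * |(k : ℝ) - t|)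
  have hq₀ : 0 ≤ q := (exp_pos _).le
  have hq₁ : q < 1 := exp_lt_one_iff.2 (by linarith)
  have hf := exp_mul_exp_le_mul_pow ψ₁ ψ₂ hrt
  have hleft : ∀ k ∈ range r, f k ≤ E * q ^ (r - k) := fun k hk =>
    (hf k).trans_eq (by rw [show r - k + (k - t) = r - k by grind])
  have hmid : ∀ k ∈ Ico r (t + 1), f k ≤ E := fun k hk =>
    (hf k).trans_eq (by rw [show r - k + (k - t) = 0 by grind, pow_zero, mul_one])
  have hright : ∀ k ∈ Ico (t + 1) (n + 1 + t), f k ≤ E * q ^ (k - t) := fun k hk =>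
    (hf k).trans_eq (by rw [show r - k + (k - t) = k - t by grind])
  -- enlarging the range makes the split at `r` and `t + 1` valid whatever `n` is
  calc ∑ k ∈ range n, f k ≤ ∑ k ∈ range (n + 1 + t), f k :=
        sum_le_sum_of_subset_of_nonneg (range_subset_range.2 (by omega))
          fun _ _ _ => by positivity
    _ = ∑ k ∈ range r, f k + ∑ k ∈ Ico r (t + 1), f k + ∑ k ∈ Ico (t + 1) (n + 1 + t), f k := by
        rw [sum_range_add_sum_Ico _ (by omega), sum_range_add_sum_Ico _ (by omega)]
    _ ≤ ∑ k ∈ range r, E * q ^ (r - k) + ∑ k ∈ Ico r (t + 1), E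
          + ∑ k ∈ Ico (t + 1) (n + 1 + t), E * q ^ (k - t) :=
        add_le_add (add_le_add (sum_le_sum hleft) (sum_le_sum hmid)) (sum_le_sum hright)
    _ ≤ E * (q / (1 - q)) + ((t : ℝ) - r + 1) * E + E * (q / (1 - q)) := by
        rw [← mul_sum, ← mul_sum, sum_const, Nat.card_Ico, nsmul_eq_mul,
          Nat.cast_sub (by omega), Nat.cast_add_one]
        gcongr
        · exact sum_range_pow_sub_le hq₀ hq₁ r
        · exact le_of_eq (by ring)
        · exact sum_Ico_pow_sub_le hq₀ hq₁ t (n + 1)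
    _ = _ := by ring

lemma sum_exp_mul_exp_le {ψ₁ ψ₂ : ℝ} (h₁ : 0 < ψ₁) (h₂ : 0 < ψ₂) (n r t : ℕ) :
    ∑ k ∈ range n, exp (-ψ₂ * |(r : ℝ) - k|) * exp (-ψ₁ * |(k : ℝ) - t|) ≤
      (|(t : ℝ) - r| + 1 + 2 * exp (-(ψ₁ + ψ₂)) / (1 - exp (-(ψ₁ + ψ₂)))) *
        exp (-min ψ₁ ψ₂ * |(t : ℝ) - r|) := by
  rcases le_total r t with h | h
  · rw [abs_of_nonneg (sub_nonneg.2 (Nat.cast_le.2 h))]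
    exact sum_exp_mul_exp_le_of_le h₁ h₂ n h
  · rw [abs_sub_comm, abs_of_nonneg (sub_nonneg.2 (Nat.cast_le.2 h)), add_comm ψ₁, min_comm]
    convert sum_exp_mul_exp_le_of_le h₂ h₁ n h using 2 with k
    rw [mul_comm, abs_sub_comm, abs_sub_comm (k : ℝ)]

theorem abs_tridiagGreenMatrix_mul_apply_le {n : ℕ} {b ψ₁ ψ₂ : ℝ} (hb : 0 < b) (h₁ : 0 < ψ₁)
    (h₂ : 0 < ψ₂) (r t : Fin n) :
    |(tridiagGreenMatrix n b ψ₂ * tridiagGreenMatrix n b ψ₁) r t| ≤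
      1 / (4 * b ^ 2 * sinh ψ₁ * sinh ψ₂ * (1 - exp (-2 * ψ₁ * (n + 1))) *
        (1 - exp (-2 * ψ₂ * (n + 1)))) *
      (|(t : ℝ) - r| + 1 + 2 * exp (-(ψ₁ + ψ₂)) / (1 - exp (-(ψ₁ + ψ₂)))) *
        exp (-min ψ₁ ψ₂ * |(t : ℝ) - r|) := by
  have hB : ∀ {ψ : ℝ}, 0 < ψ → 0 < 2 * b * sinh ψ * (1 - exp (-2 * ψ * (n + 1))) := by
    intro ψ hψ
    have : exp (-2 * ψ * (n + 1)) < 1 := exp_lt_one_iff.2 (by nlinarith)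
    have := sinh_pos_iff.2 hψ
    have : 0 < 1 - exp (-2 * ψ * (n + 1)) := by linarith
    positivity
  have hB₁ := hB h₁
  have hB₂ := hB h₂
  set B₁ := 2 * b * sinh ψ₁ * (1 - exp (-2 * ψ₁ * (n + 1)))
  set B₂ := 2 * b * sinh ψ₂ * (1 - exp (-2 * ψ₂ * (n + 1)))
  rw [mul_apply]
  calc |∑ k, tridiagGreenMatrix n b ψ₂ r k * tridiagGreenMatrix n b ψ₁ k t|
      ≤ ∑ k : Fin n, |tridiagGreenMatrix n b ψ₂ r k| * |tridiagGreenMatrix n b ψ₁ k t| :=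
        (abs_sum_le_sum_abs _ _).trans_eq (sum_congr rfl fun k _ => abs_mul _ _)
    _ ≤ ∑ k : Fin n, exp (-ψ₂ * |(r : ℝ) - k|) / B₂ * (exp (-ψ₁ * |(k : ℝ) - t|) / B₁) :=
        sum_le_sum fun k _ => mul_le_mul (abs_tridiagGreenMatrix_le hb h₂ r k)
          (abs_tridiagGreenMatrix_le hb h₁ k t) (abs_nonneg _) (by positivity)
    _ = 1 / (B₁ * B₂) * ∑ k ∈ range n, exp (-ψ₂ * |(r : ℝ) - k|) * exp (-ψ₁ * |(k : ℝ) - t|) := by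
        rw [Fin.sum_univ_eq_sum_range (fun k : ℕ =>
          exp (-ψ₂ * |(r : ℝ) - k|) / B₂ * (exp (-ψ₁ * |(k : ℝ) - t|) / B₁)), mul_sum]
        exact sum_congr rfl fun k _ => by rw [div_mul_div_comm, one_div_mul_eq_div, mul_comm B₁]
    _ ≤ 1 / (B₁ * B₂) * ((|(t : ℝ) - r| + 1 + 2 * exp (-(ψ₁ + ψ₂)) / (1 - exp (-(ψ₁ + ψ₂)))) *
        exp (-min ψ₁ ψ₂ * |(t : ℝ) - r|)) := by
        gcongr
        exact sum_exp_mul_exp_le h₁ h₂ n r t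
    _ = _ := by
        simp only [B₁, B₂]
        ring

theorem stmt_5_general (n : ℕ) (lam π₁ π₂ : ℝ)
    (hlam₁ : 0 < 2 * lam) (hπ₁ : 2 * lam < π₁) (hπ₂ : 2 * lam < π₂)
    (ψ₁ ψ₂ : ℝ) (hψ₁ : ψ₁ = _root_.arcosh (π₁ / (2 * lam)))
    (hψ₂ : ψ₂ = _root_.arcosh (π₂ / (2 * lam)))
    (Z₁ Z₂ P : Matrix (Fin n) (Fin n) ℝ)
    (hZ₁ : ∀ i j : Fin n,
      Z₁ i j =
        if (i : ℕ) = (j : ℕ) then π₁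
        else if ((i : ℤ) - (j : ℤ)).natAbs = 1 then lam
        else 0)
    (hZ₂ : ∀ i j : Fin n,
      Z₂ i j =
        if (i : ℕ) = (j : ℕ) then π₂
        else if ((i : ℤ) - (j : ℤ)).natAbs = 1 then lam
        else 0)
    (hP : P = Z₁ * Z₂) :
    IsUnit P ∧
      ∀ r t : Fin n,
        |P⁻¹ r t| ≤
          (1 / (4 * lam ^ 2 * Real.sinh ψ₁ * Real.sinh ψ₂ *
              (1 - Real.exp (-2 * ψ₁ * ((n : ℝ) + 1))) *
              (1 - Real.exp (-2 * ψ₂ * ((n : ℝ) + 1))))) *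
            (|((t : ℕ) : ℝ) - ((r : ℕ) : ℝ)| + 1 +
              2 * Real.exp (-(ψ₁ + ψ₂)) / (1 - Real.exp (-(ψ₁ + ψ₂)))) *
            Real.exp (-(min ψ₁ ψ₂) * |((t : ℕ) : ℝ) - ((r : ℕ) : ℝ)|) := by
  have hlam : 0 < lam := by linarith
  have hx₁ : 1 < π₁ / (2 * lam) := (one_lt_div hlam₁).2 hπ₁
  have hx₂ : 1 < π₂ / (2 * lam) := (one_lt_div hlam₁).2 hπ₂
  have hψ₁pos : 0 < ψ₁ := hψ₁ ▸ Real.arcosh_pos hx₁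
  have hψ₂pos : 0 < ψ₂ := hψ₂ ▸ Real.arcosh_pos hx₂
  have hZ₁' : Z₁ = tridiagToeplitz n (2 * lam * cosh ψ₁) lam := by
    rw [hψ₁, mul_cosh_arcosh_div hlam₁ hπ₁.le]
    exact Matrix.ext hZ₁
  have hZ₂' : Z₂ = tridiagToeplitz n (2 * lam * cosh ψ₂) lam := by
    rw [hψ₂, mul_cosh_arcosh_div hlam₁ hπ₂.le]
    exact Matrix.ext hZ₂
  have hinv : P * (tridiagGreenMatrix n lam ψ₂ * tridiagGreenMatrix n lam ψ₁) = 1 := by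
    rw [hP, hZ₁', hZ₂', Matrix.mul_assoc, ← Matrix.mul_assoc _ (tridiagGreenMatrix n lam ψ₂),
      tridiagToeplitz_mul_tridiagGreenMatrix n hlam.ne' hψ₂pos.ne', Matrix.one_mul,
      tridiagToeplitz_mul_tridiagGreenMatrix n hlam.ne' hψ₁pos.ne']
  refine ⟨IsUnit.of_mul_eq_one _ hinv, fun r t => ?_⟩
  rw [Matrix.inv_eq_right_inv hinv]
  exact abs_tridiagGreenMatrix_mul_apply_le hlam hψ₁pos hψ₂pos r t

/-- Exponential (log-linear) off-diagonal decay, at rate min ψ₁ ψ₂, of the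
inverse of a product of two tridiagonal Toeplitz matrices. -/
theorem stmt_5 (n : ℕ) (hn : 1 ≤ n) (lam π₁ π₂ : ℝ)
    (hlam₁ : 0 < 2 * lam) (hπ₁ : 2 * lam < π₁) (hπ₂ : 2 * lam < π₂)
    (ψ₁ ψ₂ : ℝ) (hψ₁ : ψ₁ = _root_.arcosh (π₁ / (2 * lam)))
    (hψ₂ : ψ₂ = _root_.arcosh (π₂ / (2 * lam)))
    (Z₁ Z₂ P : Matrix (Fin n) (Fin n) ℝ)
    (hZ₁ : ∀ i j : Fin n,
      Z₁ i j =
        if (i : ℕ) = (j : ℕ) then π₁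
        else if ((i : ℤ) - (j : ℤ)).natAbs = 1 then lam
        else 0)
    (hZ₂ : ∀ i j : Fin n,
      Z₂ i j =
        if (i : ℕ) = (j : ℕ) then π₂
        else if ((i : ℤ) - (j : ℤ)).natAbs = 1 then lam
        else 0)
    (hP : P = Z₁ * Z₂) :
    IsUnit P ∧
      ∀ r t : Fin n,
        |P⁻¹ r t| ≤
          (1 / (4 * lam ^ 2 * Real.sinh ψ₁ * Real.sinh ψ₂ *
              (1 - Real.exp (-2 * ψ₁ * ((n : ℝ) + 1))) *
              (1 - Real.exp (-2 * ψ₂ * ((n : ℝ) + 1))))) *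
            (|((t : ℕ) : ℝ) - ((r : ℕ) : ℝ)| + 1 +
              2 * Real.exp (-(ψ₁ + ψ₂)) / (1 - Real.exp (-(ψ₁ + ψ₂)))) *
            Real.exp (-(min ψ₁ ψ₂) * |((t : ℕ) : ℝ) - ((r : ℕ) : ℝ)|) :=
  stmt_5_general n lam π₁ π₂ hlam₁ hπ₁ hπ₂ ψ₁ ψ₂ hψ₁ hψ₂ Z₁ Z₂ P hZ₁ hZ₂ hP
end

section
/- Let γₙ be the product on ℝⁿ of n copies of the standard normal distribution N(0,1), let L be a real d_x×n matrix and M a real d_y×n matrix. Then the covariance under γₙ of the squared Euclidean norms ‖Lz‖² and ‖Mz‖² equals 2·‖L Mᵀ‖_F²: that is, ∫ ‖Lz‖²‖Mz‖² dγₙ(z) − (∫ ‖Lz‖² dγₙ(z))·(∫ ‖Mz‖² dγₙ(z)) = 2·Σ_{i,k} ((L Mᵀ)_{ik})². -/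
/-!
Under the standard Gaussian measure on `ℝⁿ`, the linear form `z ↦ v ⬝ᵥ z` has law
`N(0, v ⬝ᵥ v)`, so its second and fourth moments are `v ⬝ᵥ v` and `m · (v ⬝ᵥ v)²` with
`m = ∫ x⁴ dN(0,1)`. The polarization identity `x²y² = ((x+y)⁴ + (x-y)⁴ - 2x⁴ - 2y⁴) / 12`
then gives `∫ (a ⬝ᵥ z)² (b ⬝ᵥ z)² = m ((a ⬝ᵥ a)(b ⬝ᵥ b) + 2 (a ⬝ᵥ b)²) / 3`. In dimension two,
with `a`, `b` the two unit vectors, the left side is `(∫ x² dN(0,1))² = 1` by independence,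
which forces `m = 3`. Summing over the rows of `L` and `M` proves the theorem, since
`(L Mᵀ)ᵢₖ` is the dot product of the `i`-th row of `L` with the `k`-th row of `M`.
-/

open Matrix MeasureTheory ProbabilityTheory
open scoped NNReal

lemma integrable_pow_gaussianReal (μ : ℝ) (v : ℝ≥0) (k : ℕ) :
    Integrable (fun x => x ^ k) (gaussianReal μ v) :=
  integrable_pow_of_mem_interior_integrableExpSet (X := fun x => x) (by simp) k

lemma integral_sq_gaussianReal (v : ℝ≥0) : ∫ x, x ^ 2 ∂gaussianReal 0 v = v := by
  rw [← variance_of_integral_eq_zero aemeasurable_id' (by simp), variance_fun_id_gaussianReal]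

lemma gaussianReal_map_sqrt_mul (v : ℝ≥0) :
    (gaussianReal 0 1).map (√(v : ℝ) * ·) = gaussianReal 0 v := by
  rw [gaussianReal_map_const_mul, mul_zero]
  congr
  ext
  simp

lemma integral_pow_gaussianReal_eq (v : ℝ≥0) (k : ℕ) :
    ∫ x, x ^ k ∂gaussianReal 0 v = √(v : ℝ) ^ k * ∫ x, x ^ k ∂gaussianReal 0 1 := by
  rw [← gaussianReal_map_sqrt_mul, integral_map (by fun_prop) (by fun_prop),
    ← integral_const_mul]
  simp_rw [mul_pow]

lemma sq_dotProduct_mul_sq_dotProduct {ι : Type*} [Fintype ι] (a b z : ι → ℝ) :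
    (a ⬝ᵥ z) ^ 2 * (b ⬝ᵥ z) ^ 2 =
      (((a + b) ⬝ᵥ z) ^ 4 + ((a - b) ⬝ᵥ z) ^ 4 - 2 * (a ⬝ᵥ z) ^ 4 - 2 * (b ⬝ᵥ z) ^ 4) / 12 := by
  rw [add_dotProduct, sub_dotProduct]
  ring

section StdGaussianPi

variable {ι : Type*} [Fintype ι]

local notation "γ" => Measure.pi fun _ : ι => gaussianReal 0 1

lemma pi_gaussianReal_map_dotProduct (v : ι → ℝ) :
    (γ).map (v ⬝ᵥ ·) = gaussianReal 0 (v ⬝ᵥ v).toNNReal := by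
  have hcomp : (v ⬝ᵥ ·) = innerSL ℝ (WithLp.toLp 2 v : EuclideanSpace ℝ ι) ∘ WithLp.toLp 2 := by
    ext z
    simp [EuclideanSpace.inner_eq_star_dotProduct, dotProduct_comm]
  rw [hcomp, ← Measure.map_map (by fun_prop) (by fun_prop), map_pi_eq_stdGaussian,
    IsGaussian.map_eq_gaussianReal, integral_strongDual_stdGaussian, variance_dual_stdGaussian,
    innerSL_apply_norm, EuclideanSpace.real_norm_sq_eq]
  simp [dotProduct, sq]

lemma integrable_dotProduct_pow (v : ι → ℝ) (k : ℕ) :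
    Integrable (fun z => (v ⬝ᵥ z) ^ k) γ := by
  have h := integrable_pow_gaussianReal 0 (v ⬝ᵥ v).toNNReal k
  rw [← pi_gaussianReal_map_dotProduct] at h
  exact h.comp_measurable (by fun_prop)

lemma integral_dotProduct_pow (v : ι → ℝ) (k : ℕ) :
    ∫ z, (v ⬝ᵥ z) ^ k ∂γ = ∫ x, x ^ k ∂gaussianReal 0 (v ⬝ᵥ v).toNNReal := by
  rw [← pi_gaussianReal_map_dotProduct, integral_map (by fun_prop) (by fun_prop)]

lemma integral_dotProduct_sq (v : ι → ℝ) : ∫ z, (v ⬝ᵥ z) ^ 2 ∂γ = v ⬝ᵥ v := by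
  have hv : 0 ≤ v ⬝ᵥ v := by simpa using dotProduct_self_star_nonneg v
  rw [integral_dotProduct_pow, integral_sq_gaussianReal, Real.coe_toNNReal _ hv]

lemma integral_dotProduct_pow_four (v : ι → ℝ) :
    ∫ z, (v ⬝ᵥ z) ^ 4 ∂γ = (v ⬝ᵥ v) ^ 2 * ∫ x, x ^ 4 ∂gaussianReal 0 1 := by
  have hv : 0 ≤ v ⬝ᵥ v := by simpa using dotProduct_self_star_nonneg v
  rw [integral_dotProduct_pow, integral_pow_gaussianReal_eq, Real.coe_toNNReal _ hv,
    show 4 = 2 * 2 from rfl, pow_mul, Real.sq_sqrt hv]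

lemma integrable_sq_dotProduct_mul_sq_dotProduct (a b : ι → ℝ) :
    Integrable (fun z => (a ⬝ᵥ z) ^ 2 * (b ⬝ᵥ z) ^ 2) γ := by
  have h4 (v : ι → ℝ) := integrable_dotProduct_pow v 4
  simp_rw [sq_dotProduct_mul_sq_dotProduct a b]
  exact ((((h4 _).add (h4 _)).sub ((h4 a).const_mul 2)).sub ((h4 b).const_mul 2)).div_const 12

lemma integral_sq_dotProduct_mul_sq_dotProduct_eq (a b : ι → ℝ) :
    ∫ z, (a ⬝ᵥ z) ^ 2 * (b ⬝ᵥ z) ^ 2 ∂γ =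
      ((a ⬝ᵥ a) * (b ⬝ᵥ b) + 2 * (a ⬝ᵥ b) ^ 2) * (∫ x, x ^ 4 ∂gaussianReal 0 1) / 3 := by
  have h4 (v : ι → ℝ) := integrable_dotProduct_pow v 4
  have hsum := (h4 (a + b)).fun_add (h4 (a - b))
  have hdiff : Integrable
      (fun z => ((a + b) ⬝ᵥ z) ^ 4 + ((a - b) ⬝ᵥ z) ^ 4 - 2 * (a ⬝ᵥ z) ^ 4) γ :=
    hsum.sub ((h4 a).const_mul 2)
  simp_rw [sq_dotProduct_mul_sq_dotProduct a b]
  rw [integral_div, integral_sub hdiff ((h4 b).const_mul 2),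
    integral_sub hsum ((h4 a).const_mul 2), integral_add (h4 _) (h4 _), integral_const_mul,
    integral_const_mul]
  simp only [integral_dotProduct_pow_four]
  simp only [add_dotProduct, sub_dotProduct, dotProduct_add, dotProduct_sub, dotProduct_comm b a]
  ring

lemma integral_pow_four_gaussianReal : ∫ x, x ^ 4 ∂gaussianReal 0 1 = 3 := by
  have key := integral_sq_dotProduct_mul_sq_dotProduct_eq
    (Pi.single 0 1 : Fin 2 → ℝ) (Pi.single 1 1)
  have hprod : ∫ z : Fin 2 → ℝ, ∏ i, z i ^ 2 ∂(Measure.pi fun _ => gaussianReal 0 1) = 1 := by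
    rw [integral_fintype_prod_eq_prod (fun _ x => x ^ 2)]
    simp [integral_sq_gaussianReal]
  simp only [Fin.isValue, single_dotProduct, one_mul, dotProduct_single, Pi.single_eq_same,
    mul_one, ne_eq, one_ne_zero, not_false_eq_true, Pi.single_eq_of_ne, OfNat.ofNat_ne_zero,
    zero_pow, mul_zero, add_zero, Fin.prod_univ_two] at key hprod
  linarith

lemma integral_sq_dotProduct_mul_sq_dotProduct (a b : ι → ℝ) :
    ∫ z, (a ⬝ᵥ z) ^ 2 * (b ⬝ᵥ z) ^ 2 ∂γ = (a ⬝ᵥ a) * (b ⬝ᵥ b) + 2 * (a ⬝ᵥ b) ^ 2 := by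
  rw [integral_sq_dotProduct_mul_sq_dotProduct_eq, integral_pow_four_gaussianReal]
  ring

variable {m p : Type*} [Fintype m] [Fintype p]

lemma mulVec_dotProduct_mulVec_self (L : Matrix m ι ℝ) (z : ι → ℝ) :
    L *ᵥ z ⬝ᵥ L *ᵥ z = ∑ i, (L.row i ⬝ᵥ z) ^ 2 :=
  Finset.sum_congr rfl fun _ _ => (sq _).symm

lemma integral_mulVec_dotProduct_mulVec_self (L : Matrix m ι ℝ) :
    ∫ z, L *ᵥ z ⬝ᵥ L *ᵥ z ∂γ = ∑ i, L.row i ⬝ᵥ L.row i := by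
  simp_rw [mulVec_dotProduct_mulVec_self]
  rw [integral_finsetSum _ fun i _ => integrable_dotProduct_pow _ 2]
  simp_rw [integral_dotProduct_sq]

lemma integral_mulVec_dotProduct_mulVec_self_mul (L : Matrix m ι ℝ) (M : Matrix p ι ℝ) :
    ∫ z, (L *ᵥ z ⬝ᵥ L *ᵥ z) * (M *ᵥ z ⬝ᵥ M *ᵥ z) ∂γ =
      ∑ i, ∑ k, ((L.row i ⬝ᵥ L.row i) * (M.row k ⬝ᵥ M.row k) + 2 * (L.row i ⬝ᵥ M.row k) ^ 2) := by
  have hint (i : m) (k : p) := integrable_sq_dotProduct_mul_sq_dotProduct (L.row i) (M.row k)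
  simp_rw [mulVec_dotProduct_mulVec_self, Finset.sum_mul_sum]
  rw [integral_finsetSum _ fun i _ => integrable_finsetSum _ fun k _ => hint i k]
  refine Finset.sum_congr rfl fun i _ => ?_
  rw [integral_finsetSum _ fun k _ => hint i k]
  simp_rw [integral_sq_dotProduct_mul_sq_dotProduct]

end StdGaussianPi

/-- The covariance of the squared Euclidean norms ‖Lz‖² and ‖Mz‖² of Gaussian
vectors equals twice the squared Frobenius norm of L Mᵀ. -/
theorem stmt_13 (n dx dy : ℕ)
    (L : Matrix (Fin dx) (Fin n) ℝ) (M : Matrix (Fin dy) (Fin n) ℝ) :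
    (∫ z : Fin n → ℝ, (L.mulVec z ⬝ᵥ L.mulVec z) * (M.mulVec z ⬝ᵥ M.mulVec z)
        ∂(Measure.pi fun _ => gaussianReal 0 1)) -
      (∫ z : Fin n → ℝ, L.mulVec z ⬝ᵥ L.mulVec z
          ∂(Measure.pi fun _ => gaussianReal 0 1)) *
        (∫ z : Fin n → ℝ, M.mulVec z ⬝ᵥ M.mulVec z
          ∂(Measure.pi fun _ => gaussianReal 0 1)) =
      2 * ∑ i : Fin dx, ∑ k : Fin dy, ((L * Mᵀ) i k) ^ 2 := by
  have hLM (i : Fin dx) (k : Fin dy) : (L * Mᵀ) i k = L.row i ⬝ᵥ M.row k := rfl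
  rw [integral_mulVec_dotProduct_mulVec_self_mul, integral_mulVec_dotProduct_mulVec_self,
    integral_mulVec_dotProduct_mulVec_self, Finset.sum_mul_sum]
  simp only [hLM, Finset.sum_add_distrib, Finset.mul_sum]
  ring
end
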